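/- For all nonnegative integers m and n, S(m,n) = C(2m,m)·C(2n,n) + 2·Σ_{k=1}^{∞} (-1)^k · C(2m, m+k) · C(2n, n+k), where S(m,n) = (2m)!(2n)!/(m!·n!·(m+n)!). -/

import Mathlib

/-!
Both sides extend to the two-sided sum `T(m, n) = ∑_{k ∈ ℤ} (-1)^k C(2m, m+k) C(2n, n+k)`, and the
right-hand side is `T(m, n)` folded by the symmetry `k ↦ -k`. Both `S` and `T` satisfy
`X(m+1, n) + X(m, n+1) = 4 X(m, n)` and `X(0, n) = C(2n, n)`, which determine `X` by induction on `m`.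
For `S` the recurrence is factorial arithmetic; for `T`, applying Pascal's rule twice to each
binomial turns the difference of the two sides into a telescoping sum.
-/

open Finset

theorem sum_Icc_sub_sub_one {G : Type*} [AddCommGroup G] (f : ℤ → G) {a b : ℤ} (h : a - 1 ≤ b) :
    ∑ k ∈ Icc a b, (f k - f (k - 1)) = f b - f (a - 1) := by
  obtain ⟨n, rfl⟩ : ∃ n : ℕ, b = a - 1 + n := ⟨(b - (a - 1)).toNat, by omega⟩
  induction n with
  | zero => simp
  | succ n ih =>
    rw [Nat.cast_succ, ← add_assoc, ← insert_Icc_right_eq_Icc_add_one (by omega),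
      sum_insert (by simp), ih (by omega), add_sub_cancel_right]
    abel

theorem sum_Icc_neg_eq_of_even {M : Type*} [AddCommMonoid M] {f : ℤ → M} (hf : f.Even) (L : ℕ) :
    ∑ k ∈ Icc (-(L : ℤ)) L, f k = f 0 + 2 • ∑ k ∈ Icc 1 L, f k := by
  induction L with
  | zero => simp
  | succ L ih =>
    rw [Nat.cast_succ, ← insert_Icc_right_eq_Icc_add_one (by omega), neg_add',
      ← insert_Icc_left_eq_Icc_sub_one (by omega), sum_insert (by simp; omega),
      sum_insert (by simp), sum_Icc_succ_top (by omega), ih, ← neg_add', hf, Nat.cast_succ]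
    abel

def intChoose (a : ℕ) : ℤ → ℕ
  | (b : ℕ) => a.choose b
  | Int.negSucc _ => 0

@[simp]
theorem intChoose_natCast (a b : ℕ) : intChoose a b = a.choose b := rfl

@[simp]
theorem intChoose_zero_right (a : ℕ) : intChoose a 0 = 1 := Nat.choose_zero_right a

theorem intChoose_of_neg (a : ℕ) {b : ℤ} (hb : b < 0) : intChoose a b = 0 := by
  obtain ⟨c, rfl⟩ := Int.eq_negSucc_of_lt_zero hb
  rfl

theorem intChoose_of_lt {a : ℕ} {b : ℤ} (hb : (a : ℤ) < b) : intChoose a b = 0 := by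
  lift b to ℕ using by omega
  exact Nat.choose_eq_zero_of_lt (by omega)

theorem intChoose_succ (a : ℕ) (b : ℤ) :
    intChoose (a + 1) b = intChoose a b + intChoose a (b - 1) := by
  rcases lt_or_ge b 0 with hb | hb
  · simp [intChoose_of_neg _ hb, intChoose_of_neg _ (show b - 1 < 0 by omega)]
  lift b to ℕ using hb
  cases b with
  | zero => simp [intChoose_of_neg a (show (-1 : ℤ) < 0 by omega)]
  | succ c =>
    rw [show ((c + 1 : ℕ) : ℤ) - 1 = c by omega, intChoose_natCast, intChoose_natCast,
      intChoose_natCast, Nat.choose_succ_succ', add_comm]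

theorem intChoose_add_two (a : ℕ) (b : ℤ) :
    intChoose (a + 2) (b + 1) = intChoose a (b + 1) + 2 * intChoose a b + intChoose a (b - 1) := by
  rw [intChoose_succ, intChoose_succ, intChoose_succ, add_sub_cancel_right]
  ring

theorem intChoose_sub (a : ℕ) (b : ℤ) : intChoose a (a - b) = intChoose a b := by
  rcases lt_or_ge b 0 with hb | hb
  · rw [intChoose_of_lt (by omega), intChoose_of_neg _ hb]
  rcases lt_or_ge (a : ℤ) b with hab | hab
  · rw [intChoose_of_lt hab, intChoose_of_neg _ (by omega)]
  lift b to ℕ using hb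
  rw [← Nat.cast_sub (by omega), intChoose_natCast, intChoose_natCast, Nat.choose_symm (by omega)]

def superCatalan (m n : ℕ) : ℚ :=
  ((Nat.factorial (2 * m) * Nat.factorial (2 * n) : ℚ)) /
    (Nat.factorial m * Nat.factorial n * Nat.factorial (m + n))

theorem superCatalan_comm (m n : ℕ) : superCatalan m n = superCatalan n m := by
  rw [superCatalan, superCatalan, add_comm m n]
  ring

theorem superCatalan_zero_left (n : ℕ) : superCatalan 0 n = (2 * n).choose n := by
  rw [superCatalan, Nat.cast_choose ℚ (by omega : n ≤ 2 * n), show 2 * n - n = n by omega]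
  simp

theorem superCatalan_succ_left_mul (m n : ℕ) :
    superCatalan (m + 1) n * (m + n + 1) = 2 * (2 * m + 1) * superCatalan m n := by
  rw [superCatalan, superCatalan, show 2 * (m + 1) = 2 * m + 1 + 1 by ring,
    show m + 1 + n = m + n + 1 by ring]
  simp only [Nat.factorial_succ]
  push_cast
  field_simp
  ring

theorem superCatalan_succ_left_add_succ_right (m n : ℕ) :
    superCatalan (m + 1) n + superCatalan m (n + 1) = 4 * superCatalan m n := by
  have hm := superCatalan_succ_left_mul m n
  have hn := superCatalan_succ_left_mul n m
  rw [superCatalan_comm (n + 1), superCatalan_comm n, add_comm (n : ℚ)] at hn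
  refine mul_right_cancel₀ (show (m + n + 1 : ℚ) ≠ 0 by positivity) ?_
  linear_combination hm + hn

def szilyTerm (m n : ℕ) (k : ℤ) : ℚ :=
  (-1) ^ k * intChoose (2 * m) (m + k) * intChoose (2 * n) (n + k)

-- The terms vanish for `|k| > m`, so for `m ≤ L` this is the full two-sided sum.
noncomputable def szilySum (m n L : ℕ) : ℚ := ∑ k ∈ Icc (-(L : ℤ)) L, szilyTerm m n k

def szilyFlux (m n : ℕ) (k : ℤ) : ℚ :=
  (-1) ^ k * (intChoose (2 * m) (m + k) * intChoose (2 * n) (n + k + 1) +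
    intChoose (2 * m) (m + k + 1) * intChoose (2 * n) (n + k))

theorem szilyTerm_natCast (m n k : ℕ) :
    szilyTerm m n k = (-1) ^ k * (2 * m).choose (m + k) * (2 * n).choose (n + k) := by
  rw [szilyTerm, zpow_natCast, ← Nat.cast_add, ← Nat.cast_add, intChoose_natCast,
    intChoose_natCast]

theorem szilyTerm_even (m n : ℕ) : (szilyTerm m n).Even := by
  intro k
  have hsymm (a : ℕ) : intChoose (2 * a) (a + -k) = intChoose (2 * a) (a + k) := by
    rw [← intChoose_sub, Nat.cast_mul, Nat.cast_two]
    ring_nf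
  rw [szilyTerm, szilyTerm, hsymm, hsymm, zpow_neg, ← inv_zpow, inv_neg_one]

theorem szilyTerm_recurrence (m n : ℕ) (k : ℤ) :
    szilyTerm m (n + 1) k + szilyTerm (m + 1) n k - 4 * szilyTerm m n k =
      szilyFlux m n k - szilyFlux m n (k - 1) := by
  simp only [szilyTerm, szilyFlux, Nat.cast_succ, mul_add_one, add_right_comm _ (1 : ℤ),
    intChoose_add_two, zpow_sub_one₀ (show (-1 : ℚ) ≠ 0 by norm_num), ← add_sub_assoc,
    sub_add_cancel, inv_neg_one]
  push_cast
  ring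

theorem szilyFlux_of_lt {m n : ℕ} {k : ℤ} (hk : m < k) : szilyFlux m n k = 0 := by
  rw [szilyFlux, intChoose_of_lt (b := m + k) (by push_cast; omega),
    intChoose_of_lt (b := m + k + 1) (by push_cast; omega)]
  simp

theorem szilyFlux_of_lt_neg {m n : ℕ} {k : ℤ} (hk : k + 1 < -m) : szilyFlux m n k = 0 := by
  rw [szilyFlux, intChoose_of_neg _ (show m + k < 0 by omega),
    intChoose_of_neg _ (show m + k + 1 < 0 by omega)]
  simp

theorem szilySum_recurrence {m L : ℕ} (n : ℕ) (hL : m < L) :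
    szilySum m (n + 1) L + szilySum (m + 1) n L = 4 * szilySum m n L := by
  have htel := sum_Icc_sub_sub_one (szilyFlux m n) (show -(L : ℤ) - 1 ≤ L by omega)
  rw [szilyFlux_of_lt (by omega), szilyFlux_of_lt_neg (by omega), sub_zero] at htel
  simp only [← szilyTerm_recurrence, sum_sub_distrib, sum_add_distrib, ← mul_sum] at htel
  rw [szilySum, szilySum, szilySum]
  linear_combination htel

theorem szilySum_zero_left (n L : ℕ) : szilySum 0 n L = (2 * n).choose n := by
  rw [szilySum, sum_eq_single_of_mem 0 (by simp), szilyTerm]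
  · simp
  intro k _ hk
  rcases hk.lt_or_gt with hk | hk
  · rw [szilyTerm, intChoose_of_neg _ (by omega)]; simp
  · rw [szilyTerm, intChoose_of_lt (by push_cast; omega)]; simp

theorem superCatalan_eq_szilySum {m L : ℕ} (n : ℕ) (hm : m ≤ L) :
    superCatalan m n = szilySum m n L := by
  induction m generalizing n with
  | zero => rw [superCatalan_zero_left, szilySum_zero_left]
  | succ m ih =>
    have hS := superCatalan_succ_left_add_succ_right m n
    have hT := szilySum_recurrence n (show m < L by omega)
    rw [ih n (by omega), ih (n + 1) (by omega)] at hS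
    linarith

theorem superCatalan_symmetrized (m n : ℕ) :
    ((Nat.factorial (2 * m) * Nat.factorial (2 * n) : ℚ)) /
      (Nat.factorial m * Nat.factorial n * Nat.factorial (m + n)) =
    (Nat.choose (2 * m) m * Nat.choose (2 * n) n : ℚ) +
      2 * ∑ᶠ (k : ℕ) (_ : 1 ≤ k),
        ((-1 : ℚ) ^ k) * (Nat.choose (2 * m) (m + k) : ℚ) * (Nat.choose (2 * n) (n + k) : ℚ) := by
  have hsupport : ∀ {k : ℕ},
      (-1 : ℚ) ^ k * (2 * m).choose (m + k) * (2 * n).choose (n + k) ≠ 0 →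
        (1 ≤ k ↔ k ∈ Icc 1 m) := by
    intro k hk
    have hkm : k ≤ m := by
      by_contra hkm
      exact hk (by rw [Nat.choose_eq_zero_of_lt (by omega)]; simp)
    simp [hkm]
  have hfold := sum_Icc_neg_eq_of_even (szilyTerm_even m n) m
  rw [finsum_cond_eq_sum_of_cond_iff _ hsupport, ← superCatalan,
    superCatalan_eq_szilySum n le_rfl, szilySum, hfold, nsmul_eq_mul, Nat.cast_two]
  simp only [← szilyTerm_natCast]
  simp [szilyTerm]
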